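/- arXiv:2501.02723 — 2 statements merged into one kernel-verified Lean document; each statement's English description precedes it below -/
import Mathlib

section
/- Let A be an alphabet with distinguished symbol # and two distinct symbols a, b ∈ A∖{#}. For each n ≥ 1, the radius-n block code f_n that sends #a^{n−1}ba^{n−1}# ↦ a (at the central position), #a^{2n−1}# ↦ b (at the central position), and is the identity otherwise, defines a shift-commuting involution φ_n of A^ℤ which is #-preserving, and its induced length-preserving bijection φ_n* of (A∖{#})* swaps a^{2n−1} with a^{n−1}ba^{n−1} and fixes every other word. -/
open Function

/-- The shift map on bi-infinite sequences. -/
def shiftMap {A : Type*} (x : ℤ → A) : ℤ → A := fun n => x (n + 1)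

/-- The cylinder set of sequences beginning with the word `u` at position `0`. -/
def Cyl {A : Type*} (u : List A) : Set (ℤ → A) :=
  {x | ∀ j : Fin u.length, x (j.1 : ℤ) = u.get j}

open Classical in
/-- The radius-`n` block-code map `φ_n`: it sends the central letter of
`# a^{n-1} b a^{n-1} #` to `a`, the central letter of `# a^{2n-1} #` to `b`, and leaves
everything else unchanged. -/
noncomputable def phiN {A : Type*} (hash a b : A) (n : ℕ) (x : ℤ → A) : ℤ → A :=
  fun m =>
    if x (m - n) = hash ∧ x (m + n) = hash ∧
        (∀ j : ℤ, j.natAbs ≤ n - 1 → j ≠ 0 → x (m + j) = a) ∧ x m = b then a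
    else if x (m - n) = hash ∧ x (m + n) = hash ∧
        (∀ j : ℤ, j.natAbs ≤ n - 1 → x (m + j) = a) then b
    else x m

open Classical in
/-- The induced map `φ_n*` on words: it swaps `a^{2n-1}` and `a^{n-1} b a^{n-1}` and fixes
all other words. -/
noncomputable def phiStar {A : Type*} (a b : A) (n : ℕ) (w : List A) : List A :=
  if w = List.replicate (2 * n - 1) a then
    List.replicate (n - 1) a ++ [b] ++ List.replicate (n - 1) a
  else if w = List.replicate (n - 1) a ++ [b] ++ List.replicate (n - 1) a then
    List.replicate (2 * n - 1) a
  else w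

section
variable {A : Type*} (hash a b : A) (n : ℕ)

def condA (x : ℤ → A) (m : ℤ) : Prop :=
  x (m - n) = hash ∧ x (m + n) = hash ∧
    (∀ j : ℤ, j.natAbs ≤ n - 1 → j ≠ 0 → x (m + j) = a) ∧ x m = b

def condB (x : ℤ → A) (m : ℤ) : Prop :=
  x (m - n) = hash ∧ x (m + n) = hash ∧
    (∀ j : ℤ, j.natAbs ≤ n - 1 → x (m + j) = a)

def Trig (x : ℤ → A) (m : ℤ) : Prop := condA hash a b n x m ∨ condB hash a n x m

variable {hash a b : A} {n : ℕ}

lemma phiN_of_A {x : ℤ → A} {m : ℤ} (h : condA hash a b n x m) :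
    phiN hash a b n x m = a := if_pos h

lemma phiN_of_B {x : ℤ → A} {m : ℤ} (hA : ¬ condA hash a b n x m)
    (hB : condB hash a n x m) : phiN hash a b n x m = b :=
  (if_neg hA).trans (if_pos hB)

lemma phiN_untrig {x : ℤ → A} {m : ℤ} (h : ¬ Trig hash a b n x m) :
    phiN hash a b n x m = x m :=
  (if_neg (fun hA => h (Or.inl hA))).trans (if_neg (fun hB => h (Or.inr hB)))

lemma interior_a {x : ℤ → A} {m : ℤ} (h : Trig hash a b n x m) {j : ℤ}
    (hj : j.natAbs ≤ n - 1) (hj0 : j ≠ 0) : x (m + j) = a :=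
  h.elim (fun h => h.2.2.1 j hj hj0) (fun h => h.2.2 j hj)

lemma trig_end1 {x : ℤ → A} {m : ℤ} (h : Trig hash a b n x m) : x (m - n) = hash :=
  h.elim (·.1) (·.1)

lemma trig_end2 {x : ℤ → A} {m : ℤ} (h : Trig hash a b n x m) : x (m + n) = hash :=
  h.elim (·.2.1) (·.2.1)

lemma center_ne_hash (ha : a ≠ hash) (hb : b ≠ hash) {x : ℤ → A} {m : ℤ}
    (h : Trig hash a b n x m) : x m ≠ hash := by
  rcases h with h | h
  · rw [h.2.2.2]; exact hb
  · have := h.2.2 0 (by simp); rw [add_zero] at this; rw [this]; exact ha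

lemma sep (ha : a ≠ hash) (hb : b ≠ hash) {x : ℤ → A} {m j : ℤ}
    (h1 : Trig hash a b n x m) (h2 : Trig hash a b n x (m + j))
    (hj0 : j ≠ 0) (hj : j.natAbs < 2 * n) : False := by
  rcases lt_or_gt_of_ne hj0 with hneg | hpos
  · have e : x (m + (j + n)) = hash := by
      rw [show m + (j + n) = (m + j) + n by ring]; exact trig_end2 h2
    rcases eq_or_ne (j + n) 0 with h0 | h0
    · rw [h0, add_zero] at e; exact center_ne_hash ha hb h1 e
    · rw [interior_a h1 (by omega) h0] at e; exact ha e
  · have e : x (m + (j - n)) = hash := by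
      rw [show m + (j - n) = (m + j) - n by ring]; exact trig_end1 h2
    rcases eq_or_ne (j - n) 0 with h0 | h0
    · rw [h0, add_zero] at e; exact center_ne_hash ha hb h1 e
    · rw [interior_a h1 (by omega) h0] at e; exact ha e

lemma eq_hash (ha : a ≠ hash) (hb : b ≠ hash) {x : ℤ → A} {m : ℤ}
    (h : phiN hash a b n x m = hash) : x m = hash ∧ ¬ Trig hash a b n x m := by
  by_cases hA : condA hash a b n x m
  · rw [phiN_of_A hA] at h; exact absurd h ha
  · by_cases hB : condB hash a n x m
    · rw [phiN_of_B hA hB] at h; exact absurd h hb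
    · have ht : ¬ Trig hash a b n x m := fun hc => hc.elim hA hB
      rw [phiN_untrig ht] at h; exact ⟨h, ht⟩

lemma phiN_invol (hab : a ≠ b) (ha : a ≠ hash) (hb : b ≠ hash) (hn : 1 ≤ n)
    (x : ℤ → A) (m : ℤ) : phiN hash a b n (phiN hash a b n x) m = x m := by
  set y := phiN hash a b n x with hy
  by_cases hT : Trig hash a b n x m
  · have hend1 : y (m - n) = hash := by
      have hnt : ¬ Trig hash a b n x (m - n) := by
        intro hc
        have h2 := trig_end2 hc
        rw [show m - (n : ℤ) + n = m by ring] at h2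
        exact center_ne_hash ha hb hT h2
      rw [hy, phiN_untrig hnt]; exact trig_end1 hT
    have hend2 : y (m + n) = hash := by
      have hnt : ¬ Trig hash a b n x (m + n) := by
        intro hc
        have h2 := trig_end1 hc
        rw [show m + (n : ℤ) - n = m by ring] at h2
        exact center_ne_hash ha hb hT h2
      rw [hy, phiN_untrig hnt]; exact trig_end2 hT
    have hint : ∀ j : ℤ, j.natAbs ≤ n - 1 → j ≠ 0 → y (m + j) = a := by
      intro j hj hj0
      have hnt : ¬ Trig hash a b n x (m + j) := fun hc => sep ha hb hT hc hj0 (by omega)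
      rw [hy, phiN_untrig hnt]; exact interior_a hT hj hj0
    rcases hT with hA | hB
    · have hym : y m = a := phiN_of_A hA
      have hBy : condB hash a n y m := by
        refine ⟨hend1, hend2, fun j hj => ?_⟩
        rcases eq_or_ne j 0 with rfl | hj0
        · rw [add_zero]; exact hym
        · exact hint j hj hj0
      have hAy : ¬ condA hash a b n y m := fun h => hab (hym.symm.trans h.2.2.2)
      rw [phiN_of_B hAy hBy, hA.2.2.2]
    · have hxm : x m = a := by have h0 := hB.2.2 0 (by simp); rwa [add_zero] at h0
      have hAx : ¬ condA hash a b n x m := fun h => hab (hxm.symm.trans h.2.2.2)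
      have hym : y m = b := phiN_of_B hAx hB
      have hAy : condA hash a b n y m := ⟨hend1, hend2, hint, hym⟩
      rw [phiN_of_A hAy, hxm]
  · have hym : y m = x m := phiN_untrig hT
    have hnt : ¬ Trig hash a b n y m := by
      intro hc
      have e1 : phiN hash a b n x (m - n) = hash := by rw [← hy]; exact trig_end1 hc
      have e2 : phiN hash a b n x (m + n) = hash := by rw [← hy]; exact trig_end2 hc
      obtain ⟨hx1, hnt1⟩ := eq_hash ha hb e1
      obtain ⟨hx2, hnt2⟩ := eq_hash ha hb e2
      have key : ∀ j : ℤ, j.natAbs ≤ n - 1 → ¬ Trig hash a b n x (m + j) := by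
        intro j hj hcj
        rcases eq_or_ne j 0 with rfl | hj0
        · rw [add_zero] at hcj; exact hT hcj
        rcases lt_or_gt_of_ne hj0 with hneg | hpos
        · have hk0 : j + (n : ℤ) ≠ 0 := by omega
          have e : x (m + (j + n)) = hash := by
            rw [show m + (j + (n : ℤ)) = (m + j) + n by ring]; exact trig_end2 hcj
          have hnt' : ¬ Trig hash a b n x (m + (j + n)) := by
            intro hc'
            refine sep ha hb hcj ?_ (show (n : ℤ) ≠ 0 by omega) (by omega)
            rw [show (m + j) + (n : ℤ) = m + (j + n) by ring]; exact hc'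
          have ha' : y (m + (j + n)) = a := interior_a hc (by omega) hk0
          rw [hy, phiN_untrig hnt', e] at ha'
          exact ha ha'.symm
        · have hk0 : j - (n : ℤ) ≠ 0 := by omega
          have e : x (m + (j - n)) = hash := by
            rw [show m + (j - (n : ℤ)) = (m + j) - n by ring]; exact trig_end1 hcj
          have hnt' : ¬ Trig hash a b n x (m + (j - n)) := by
            intro hc'
            refine sep ha hb hcj ?_ (show -(n : ℤ) ≠ 0 by omega) (by omega)
            rw [show (m + j) + -(n : ℤ) = m + (j - n) by ring]; exact hc'
          have ha' : y (m + (j - n)) = a := interior_a hc (by omega) hk0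
          rw [hy, phiN_untrig hnt', e] at ha'
          exact ha ha'.symm
      have hyx : ∀ j : ℤ, j.natAbs ≤ n - 1 → y (m + j) = x (m + j) := fun j hj => by
        rw [hy]; exact phiN_untrig (key j hj)
      apply hT
      rcases hc with hA | hB
      · exact Or.inl ⟨hx1, hx2, fun j hj hj0 => (hyx j hj).symm.trans (hA.2.2.1 j hj hj0),
          hym.symm.trans hA.2.2.2⟩
      · exact Or.inr ⟨hx1, hx2, fun j hj => (hyx j hj).symm.trans (hB.2.2 j hj)⟩
    rw [phiN_untrig hnt, hym]

lemma condA_shift {x : ℤ → A} {m : ℤ} :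
    condA hash a b n (shiftMap x) m ↔ condA hash a b n x (m + 1) := by
  unfold condA shiftMap
  constructor
  · rintro ⟨h1, h2, h3, h4⟩
    refine ⟨?_, ?_, fun j hj hj0 => ?_, h4⟩
    · rw [show m + 1 - (n : ℤ) = m - n + 1 by ring]; exact h1
    · rw [show m + 1 + (n : ℤ) = m + n + 1 by ring]; exact h2
    · rw [show m + 1 + j = m + j + 1 by ring]; exact h3 j hj hj0
  · rintro ⟨h1, h2, h3, h4⟩
    refine ⟨?_, ?_, fun j hj hj0 => ?_, h4⟩
    · rw [show m - (n : ℤ) + 1 = m + 1 - n by ring]; exact h1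
    · rw [show m + (n : ℤ) + 1 = m + 1 + n by ring]; exact h2
    · rw [show m + j + 1 = m + 1 + j by ring]; exact h3 j hj hj0

lemma condB_shift {x : ℤ → A} {m : ℤ} :
    condB hash a n (shiftMap x) m ↔ condB hash a n x (m + 1) := by
  unfold condB shiftMap
  constructor
  · rintro ⟨h1, h2, h3⟩
    refine ⟨?_, ?_, fun j hj => ?_⟩
    · rw [show m + 1 - (n : ℤ) = m - n + 1 by ring]; exact h1
    · rw [show m + 1 + (n : ℤ) = m + n + 1 by ring]; exact h2
    · rw [show m + 1 + j = m + j + 1 by ring]; exact h3 j hj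
  · rintro ⟨h1, h2, h3⟩
    refine ⟨?_, ?_, fun j hj => ?_⟩
    · rw [show m - (n : ℤ) + 1 = m + 1 - n by ring]; exact h1
    · rw [show m + (n : ℤ) + 1 = m + 1 + n by ring]; exact h2
    · rw [show m + j + 1 = m + 1 + j by ring]; exact h3 j hj

lemma phiN_shift (x : ℤ → A) :
    phiN hash a b n (shiftMap x) = shiftMap (phiN hash a b n x) := by
  funext m
  show phiN hash a b n (shiftMap x) m = phiN hash a b n x (m + 1)
  by_cases hA : condA hash a b n x (m + 1)
  · rw [phiN_of_A (condA_shift.mpr hA), phiN_of_A hA]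
  · by_cases hB : condB hash a n x (m + 1)
    · rw [phiN_of_B (fun h => hA (condA_shift.mp h)) (condB_shift.mpr hB),
        phiN_of_B hA hB]
    · have h1 : ¬ Trig hash a b n (shiftMap x) m :=
        fun hc => hc.elim (fun h => hA (condA_shift.mp h)) (fun h => hB (condB_shift.mp h))
      have h2 : ¬ Trig hash a b n x (m + 1) := fun hc => hc.elim hA hB
      rw [phiN_untrig h1, phiN_untrig h2]; rfl

lemma R_ne (hab : a ≠ b) :
    List.replicate (2 * n - 1) a ≠
      List.replicate (n - 1) a ++ [b] ++ List.replicate (n - 1) a := by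
  intro h
  have hbmem : b ∈ List.replicate (2 * n - 1) a := by rw [h]; simp
  exact hab (List.eq_of_mem_replicate hbmem).symm

lemma length_R2 (hn : 1 ≤ n) :
    (List.replicate (n - 1) a ++ [b] ++ List.replicate (n - 1) a).length = 2 * n - 1 := by
  simp; omega

lemma getR2 (hn : 1 ≤ n) {i : ℕ}
    (hi : i < (List.replicate (n - 1) a ++ [b] ++ List.replicate (n - 1) a).length) :
    (List.replicate (n - 1) a ++ [b] ++ List.replicate (n - 1) a)[i] =
      if i = n - 1 then b else a := by
  simp only [List.getElem_append, List.length_append, List.length_replicate,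
    List.length_singleton, List.getElem_replicate, List.getElem_singleton]
  split_ifs <;> first | rfl | omega

lemma mem_cyl_iff {w : List A} {x : ℤ → A} :
    x ∈ Cyl ([hash] ++ w ++ [hash]) ↔
      x 0 = hash ∧ x ((w.length : ℤ) + 1) = hash ∧
        ∀ i : ℕ, (h : i < w.length) → x ((i : ℤ) + 1) = w[i] := by
  constructor
  · intro h
    refine ⟨?_, ?_, ?_⟩
    · have h0 := h ⟨0, by simp⟩
      simpa [List.getElem_append] using h0
    · have hL := h ⟨w.length + 1, by simp⟩
      simp only [List.get_eq_getElem, List.getElem_append, List.length_append,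
        List.length_replicate, List.length_singleton] at hL
      rw [show ((w.length : ℤ) + 1) = ((w.length + 1 : ℕ) : ℤ) by push_cast; ring]
      rw [hL]
      split_ifs <;> first | rfl | exact h0 | omega | simp | (congr 1; omega)
    · intro i hi
      have hI := h ⟨i + 1, by simp; omega⟩
      simp only [List.get_eq_getElem, List.getElem_append, List.length_append,
        List.length_singleton] at hI
      rw [show ((i : ℤ) + 1) = ((i + 1 : ℕ) : ℤ) by push_cast; ring, hI]
      split_ifs <;> first | rfl | exact h0 | omega | simp | (congr 1; omega)
  · rintro ⟨h0, hL, hw⟩ ⟨j, hj⟩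
    simp only [List.length_append, List.length_singleton] at hj
    show x (j : ℤ) = _
    simp only [List.get_eq_getElem, List.getElem_append, List.length_append,
      List.length_singleton]
    rcases Nat.lt_or_ge j 1 with h1 | h1
    · have hj0 : j = 0 := by omega
      subst hj0
      split_ifs <;> first | rfl | exact h0 | omega | simp | (congr 1; omega)
    · rcases Nat.lt_or_ge j (w.length + 1) with h2 | h2
      · have := hw (j - 1) (by omega)
        rw [show ((j : ℕ) : ℤ) = (((j - 1 : ℕ)) : ℤ) + 1 by omega, this]
        split_ifs <;> first | rfl | omega | simp | (congr 1; omega)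
      · have hj' : j = w.length + 1 := by omega
        subst hj'
        rw [show (((w.length + 1 : ℕ)) : ℤ) = (w.length : ℤ) + 1 by push_cast; ring, hL]
        split_ifs <;> first | rfl | omega | simp | (congr 1; omega)

lemma mainC (hab : a ≠ b) (ha : a ≠ hash) (hb : b ≠ hash) (hn : 1 ≤ n)
    {w : List A} (hw : ∀ e ∈ w, e ≠ hash) {x : ℤ → A}
    (hx : x ∈ Cyl ([hash] ++ w ++ [hash])) :
    phiN hash a b n x ∈ Cyl ([hash] ++ phiStar a b n w ++ [hash]) := by
  obtain ⟨hx0, hxL, hxw⟩ := mem_cyl_iff.mp hx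
  set L := w.length with hLdef
  set y := phiN hash a b n x with hy
  have hb0 : ¬ Trig hash a b n x 0 := fun hc => center_ne_hash ha hb hc hx0
  have hbL : ¬ Trig hash a b n x ((L : ℤ) + 1) := fun hc => center_ne_hash ha hb hc hxL
  have hy0 : y 0 = hash := by rw [hy, phiN_untrig hb0]; exact hx0
  have hyL : y ((L : ℤ) + 1) = hash := by rw [hy, phiN_untrig hbL]; exact hxL
  have trig_loc : ∀ m : ℤ, 1 ≤ m → m ≤ (L : ℤ) → Trig hash a b n x m →
      (L : ℤ) = 2 * n - 1 ∧ m = n := by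
    intro m hm1 hm2 hc
    have e1 := trig_end1 hc
    have e2 := trig_end2 hc
    have hmn : m - (n : ℤ) = 0 := by
      by_contra hne
      rcases lt_or_gt_of_ne hne with hlt | hgt
      · have hia : x (m + (-m)) = a := interior_a hc (by omega) (by omega)
        rw [show m + (-m) = (0 : ℤ) by ring, hx0] at hia
        exact ha hia.symm
      · have hlt2 : (m - (n : ℤ) - 1).toNat < L := by omega
        have hxl := hxw (m - (n : ℤ) - 1).toNat hlt2
        rw [show (((m - (n : ℤ) - 1).toNat : ℤ)) + 1 = m - n by omega] at hxl
        rw [hxl] at e1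
        exact hw _ (List.getElem_mem _) e1
    have hmn2 : m + (n : ℤ) = (L : ℤ) + 1 := by
      by_contra hne
      rcases lt_or_gt_of_ne hne with hlt | hgt
      · have hlt2 : (m + (n : ℤ) - 1).toNat < L := by omega
        have hxl := hxw (m + (n : ℤ) - 1).toNat hlt2
        rw [show (((m + (n : ℤ) - 1).toNat : ℤ)) + 1 = m + n by omega] at hxl
        rw [hxl] at e2
        exact hw _ (List.getElem_mem _) e2
      · have hia : x (m + ((L : ℤ) + 1 - m)) = a := interior_a hc (by omega) (by omega)
        rw [show m + ((L : ℤ) + 1 - m) = (L : ℤ) + 1 by ring, hxL] at hia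
        exact ha hia.symm
    constructor <;> omega
  have hother : ∀ m : ℤ, 1 ≤ m → m ≤ (L : ℤ) → m ≠ n → y m = x m := by
    intro m hm1 hm2 hmn
    rw [hy]; exact phiN_untrig (fun hc => hmn (trig_loc m hm1 hm2 hc).2)
  by_cases h1 : w = List.replicate (2 * n - 1) a
  · have hL : L = 2 * n - 1 := by rw [hLdef, h1, List.length_replicate]
    have hstar : phiStar a b n w =
        List.replicate (n - 1) a ++ [b] ++ List.replicate (n - 1) a := by
      unfold phiStar; rw [if_pos h1]
    have hxa : ∀ i : ℕ, (h : i < L) → x ((i : ℤ) + 1) = a := by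
      intro i h
      have h' := hxw i h
      rw [List.getElem_of_eq h1, List.getElem_replicate] at h'
      exact h'
    have hBn : condB hash a n x n := by
      refine ⟨?_, ?_, fun j hj => ?_⟩
      · rw [show ((n : ℤ) - n) = 0 by ring]; exact hx0
      · rw [show ((n : ℤ) + n) = (L : ℤ) + 1 by omega]; exact hxL
      · have h' := hxa ((n : ℤ) + j - 1).toNat (by omega)
        rw [show ((((n : ℤ) + j - 1).toNat : ℤ)) + 1 = (n : ℤ) + j by omega] at h'
        exact h'
    have hAn : ¬ condA hash a b n x n := by
      intro hc
      have hcb := hc.2.2.2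
      have h'' := hxa (n - 1) (by omega)
      rw [show (((n - 1 : ℕ)) : ℤ) + 1 = (n : ℤ) by omega] at h''
      rw [h''] at hcb; exact hab hcb
    have hyn : y (n : ℤ) = b := by rw [hy]; exact phiN_of_B hAn hBn
    rw [hstar]
    apply mem_cyl_iff.mpr
    have hcast : (((List.replicate (n - 1) a ++ [b] ++ List.replicate (n - 1) a).length : ℕ) : ℤ)
        = (L : ℤ) := by rw [length_R2 hn]; omega
    refine ⟨hy0, by rw [hcast]; exact hyL, ?_⟩
    intro i hi
    rw [length_R2 hn] at hi
    rw [getR2 hn]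
    by_cases hin : i = n - 1
    · rw [if_pos hin, show ((i : ℤ) + 1) = (n : ℤ) by omega]
      exact hyn
    · rw [if_neg hin, hother ((i : ℤ) + 1) (by omega) (by omega) (by omega)]
      exact hxa i (by omega)
  · by_cases h2 : w = List.replicate (n - 1) a ++ [b] ++ List.replicate (n - 1) a
    · have hL : L = 2 * n - 1 := by rw [hLdef, h2]; exact length_R2 hn
      have hstar : phiStar a b n w = List.replicate (2 * n - 1) a := by
        unfold phiStar
        rw [if_neg (fun hh => R_ne hab (hh.symm.trans h2)), if_pos h2]
      have hxg : ∀ i : ℕ, (h : i < L) → x ((i : ℤ) + 1) = if i = n - 1 then b else a := by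
        intro i h
        have h' := hxw i h
        rw [List.getElem_of_eq h2, getR2 hn] at h'
        exact h'
      have hAn : condA hash a b n x n := by
        refine ⟨?_, ?_, fun j hj hj0 => ?_, ?_⟩
        · rw [show ((n : ℤ) - n) = 0 by ring]; exact hx0
        · rw [show ((n : ℤ) + n) = (L : ℤ) + 1 by omega]; exact hxL
        · have h' := hxg ((n : ℤ) + j - 1).toNat (by omega)
          rw [show ((((n : ℤ) + j - 1).toNat : ℤ)) + 1 = (n : ℤ) + j by omega,
            if_neg (by omega)] at h'
          exact h'
        · have h' := hxg (n - 1) (by omega)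
          rw [show (((n - 1 : ℕ)) : ℤ) + 1 = (n : ℤ) by omega, if_pos rfl] at h'
          exact h'
      have hyn : y (n : ℤ) = a := by rw [hy]; exact phiN_of_A hAn
      rw [hstar]
      apply mem_cyl_iff.mpr
      have hcast : ((List.replicate (2 * n - 1) a).length : ℤ) = (L : ℤ) := by
        rw [List.length_replicate]; omega
      refine ⟨hy0, by rw [hcast]; exact hyL, ?_⟩
      intro i hi
      rw [List.length_replicate] at hi
      rw [List.getElem_replicate]
      by_cases hin : i = n - 1
      · rw [show ((i : ℤ) + 1) = (n : ℤ) by omega]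
        exact hyn
      · rw [hother ((i : ℤ) + 1) (by omega) (by omega) (by omega)]
        have h' := hxg i (by omega)
        rw [if_neg hin] at h'
        exact h'
    · have hstar : phiStar a b n w = w := by unfold phiStar; rw [if_neg h1, if_neg h2]
      rw [hstar]
      apply mem_cyl_iff.mpr
      refine ⟨hy0, hyL, ?_⟩
      intro i hi
      have hnt : ¬ Trig hash a b n x ((i : ℤ) + 1) := by
        intro hc
        obtain ⟨hL', hm⟩ := trig_loc _ (by omega) (by omega) hc
        have hLnat : L = 2 * n - 1 := by omega
        rcases hc with hA | hB
        · apply h2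
          refine List.ext_getElem (by rw [length_R2 hn, ← hLdef]; exact hLnat) ?_
          intro k hk1 hk2
          rw [getR2 hn]
          have hik := hxw k hk1
          by_cases hkn : k = n - 1
          · rw [if_pos hkn, ← hik, show ((k : ℤ) + 1) = (i : ℤ) + 1 by omega]
            exact hA.2.2.2
          · rw [if_neg hkn, ← hik]
            have h' := hA.2.2.1 ((k : ℤ) + 1 - n) (by omega) (by omega)
            rw [show (i : ℤ) + 1 + ((k : ℤ) + 1 - (n : ℤ)) = (k : ℤ) + 1 by omega] at h'
            exact h'
        · apply h1
          refine List.ext_getElem (by rw [List.length_replicate, ← hLdef]; exact hLnat) ?_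
          intro k hk1 hk2
          rw [List.getElem_replicate, ← hxw k hk1]
          have h' := hB.2.2 ((k : ℤ) + 1 - n) (by omega)
          rw [show (i : ℤ) + 1 + ((k : ℤ) + 1 - (n : ℤ)) = (k : ℤ) + 1 by omega] at h'
          exact h'
      rw [hy, phiN_untrig hnt]
      exact hxw i hi

lemma phiStar_R1 : phiStar a b n (List.replicate (2 * n - 1) a) =
    List.replicate (n - 1) a ++ [b] ++ List.replicate (n - 1) a := by
  unfold phiStar; rw [if_pos rfl]

lemma phiStar_R2 (hab : a ≠ b) :
    phiStar a b n (List.replicate (n - 1) a ++ [b] ++ List.replicate (n - 1) a) =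
      List.replicate (2 * n - 1) a := by
  unfold phiStar; rw [if_neg (fun hh => R_ne hab hh.symm), if_pos rfl]

lemma phiStar_other {w : List A} (h1 : w ≠ List.replicate (2 * n - 1) a)
    (h2 : w ≠ List.replicate (n - 1) a ++ [b] ++ List.replicate (n - 1) a) :
    phiStar a b n w = w := by
  unfold phiStar; rw [if_neg h1, if_neg h2]

lemma phiStar_invol (hab : a ≠ b) (w : List A) :
    phiStar a b n (phiStar a b n w) = w := by
  by_cases h1 : w = List.replicate (2 * n - 1) a
  · rw [h1, phiStar_R1, phiStar_R2 hab]
  · by_cases h2 : w = List.replicate (n - 1) a ++ [b] ++ List.replicate (n - 1) a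
    · rw [h2, phiStar_R2 hab, phiStar_R1]
    · rw [phiStar_other h1 h2, phiStar_other h1 h2]

lemma phiStar_hashfree (ha : a ≠ hash) (hb : b ≠ hash) {w : List A}
    (hw : ∀ e ∈ w, e ≠ hash) : ∀ e ∈ phiStar a b n w, e ≠ hash := by
  intro e
  unfold phiStar
  split_ifs with h1 h2
  · intro he
    rcases List.mem_append.mp he with h | h
    · rcases List.mem_append.mp h with h' | h'
      · rw [List.eq_of_mem_replicate h']; exact ha
      · rw [show e = b by simpa using h']; exact hb
    · rw [List.eq_of_mem_replicate h]; exact ha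
  · intro he
    rw [List.eq_of_mem_replicate he]; exact ha
  · exact hw e

lemma phiStar_length (hn : 1 ≤ n) (w : List A) :
    (phiStar a b n w).length = w.length := by
  unfold phiStar
  split_ifs with h1 h2
  · rw [h1]; simp; omega
  · rw [h2]; simp; omega
  · rfl

end

/-- The map `φ_n` is a shift-commuting involution of `A^ℤ`, it is `#`-preserving, and it is
represented on words over `A∖{#}` by the length-preserving involution `φ_n*` which swaps
`a^{2n-1}` with `a^{n-1} b a^{n-1}` and fixes every other word. -/
theorem stmt15 {A : Type*} [Fintype A] [DecidableEq A]
    (hash a b : A) (hab : a ≠ b) (ha : a ≠ hash) (hb : b ≠ hash)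
    (n : ℕ) (hn : 1 ≤ n) :
    (∀ x : ℤ → A, phiN hash a b n (phiN hash a b n x) = x) ∧
    (∀ x : ℤ → A, phiN hash a b n (shiftMap x) = shiftMap (phiN hash a b n x)) ∧
    (∀ w : List A, (phiStar a b n w).length = w.length) ∧
    (∀ w : List A, (∀ e ∈ w, e ≠ hash) → ∀ e ∈ phiStar a b n w, e ≠ hash) ∧
    (phiStar a b n ∘ phiStar a b n = id) ∧
    phiStar a b n (List.replicate (2 * n - 1) a) =
      List.replicate (n - 1) a ++ [b] ++ List.replicate (n - 1) a ∧
    phiStar a b n (List.replicate (n - 1) a ++ [b] ++ List.replicate (n - 1) a) =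
      List.replicate (2 * n - 1) a ∧
    (∀ w : List A, w ≠ List.replicate (2 * n - 1) a →
      w ≠ List.replicate (n - 1) a ++ [b] ++ List.replicate (n - 1) a →
      phiStar a b n w = w) ∧
    (∀ w : List A, (∀ e ∈ w, e ≠ hash) →
      phiN hash a b n '' Cyl ([hash] ++ w ++ [hash]) =
        Cyl ([hash] ++ phiStar a b n w ++ [hash])) := by
  refine ⟨?_, ?_, ?_, ?_, ?_, ?_, ?_, ?_, ?_⟩
  · intro x; funext m; exact phiN_invol hab ha hb hn x m
  · intro x; exact phiN_shift x
  · exact phiStar_length hn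
  · exact fun w hw => phiStar_hashfree ha hb hw
  · funext w; exact phiStar_invol hab w
  · exact phiStar_R1
  · exact phiStar_R2 hab
  · exact fun w h1 h2 => phiStar_other h1 h2
  · intro w hw
    apply Set.Subset.antisymm
    · rintro z ⟨x, hxc, rfl⟩
      exact mainC hab ha hb hn hw hxc
    · intro z hz
      refine ⟨phiN hash a b n z, ?_, funext (phiN_invol hab ha hb hn z)⟩
      have h := mainC hab ha hb hn (phiStar_hashfree ha hb hw) hz
      rwa [phiStar_invol hab w] at h
end

section
/- Let z ∈ X^ℤ be the ternary Oxtoby sequence built from a sequence (x_n) of distinct points, i.e., z(j) = x_i whenever j ≡ (±3^{i−1} − 1)/2 (mod 3^i). Then for every i ∈ ℕ, and every r with 0 ≤ r < 3^i, and every s ≡ r (mod 3^i), the 3^i-periodic parts satisfy Per_{3^i}(σ^s z) = Per_{3^i}(σ^r z); moreover Per_{3^i}(z) equals the set of integers not congruent to the midpoint j(i,0) of [0,3^i) modulo 3^i. -/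
open Function

/-- The `p`-periodic part of a bi-infinite sequence `y`. -/
def PerSet {X : Type*} (p : ℤ) (y : ℤ → X) : Set ℤ :=
  {n : ℤ | ∀ m : ℤ, m % p = n % p → y m = y n}

/-- `z` is the ternary Oxtoby sequence built from the points `x 1, x 2, …`:
`z j = x i` whenever `j ≡ (± 3^{i−1} − 1)/2 (mod 3^i)`. -/
def IsOxtoby {X : Type*} (x : ℕ → X) (z : ℤ → X) : Prop :=
  ∀ i : ℕ, 1 ≤ i → ∀ j : ℤ,
    (j % (3 : ℤ) ^ i = (((3 : ℤ) ^ (i - 1) - 1) / 2) % (3 : ℤ) ^ i ∨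
      j % (3 : ℤ) ^ i = ((-(3 : ℤ) ^ (i - 1) - 1) / 2) % (3 : ℤ) ^ i) →
    z j = x i


private lemma emod_congr {m a b : ℤ} (h : m ∣ b - a) : a % m = b % m :=
  Int.modEq_iff_dvd.mpr h

private lemma arith (P n : ℤ) (hP : 0 < P) (hodd : P % 2 = 1)
    (hc : n % P = ((P - 1) / 2) % P) :
    n % (3*P) = ((3*P - 1) / 2) % (3*P) ∨
    n % (3*P) = ((P - 1) / 2) % (3*P) ∨
    n % (3*P) = ((-P - 1) / 2) % (3*P) := by
  have h3P : (0:ℤ) < 3*P := by linarith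
  have hcv : ((P - 1)/2) % P = (P-1)/2 := Int.emod_eq_of_lt (by omega) (by omega)
  set c := (P - 1)/2 with hcdef
  have hc2 : P = 2*c + 1 := by omega
  have hr0 : 0 ≤ n % (3*P) := Int.emod_nonneg n (by omega)
  have hr1 : n % (3*P) < 3*P := Int.emod_lt_of_pos n h3P
  have hrP : n % (3*P) % P = c := by
    rw [Int.emod_emod_of_dvd n ⟨3, by ring⟩, hc, hcv]
  obtain ⟨k, hk0, hk3, hk⟩ : ∃ k : ℤ, 0 ≤ k ∧ k < 3 ∧ n % (3*P) = c + P * k := by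
    refine ⟨n % (3*P) / P, Int.ediv_nonneg hr0 hP.le, ?_, ?_⟩
    · exact (Int.ediv_lt_iff_lt_mul hP).mpr (by linarith)
    · have h := Int.mul_ediv_add_emod (n % (3*P)) P
      rw [hrP] at h; linarith
  have e1 : ((3*P - 1)/2) % (3*P) = c + P := by
    have h1 : (3*P - 1)/2 = c + P := by omega
    rw [h1]; exact Int.emod_eq_of_lt (by omega) (by omega)
  have e2 : ((P-1)/2) % (3*P) = c := by
    rw [← hcdef]; exact Int.emod_eq_of_lt (by omega) (by omega)
  have e3 : ((-P - 1)/2) % (3*P) = c + 2*P := by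
    have h1 : (-P - 1)/2 = -(c+1) := by omega
    rw [h1]
    have h2 : (-(c+1)) % (3*P) = (c + 2*P) % (3*P) :=
      emod_congr ⟨1, by omega⟩
    rw [h2]; exact Int.emod_eq_of_lt (by omega) (by omega)
  have hk012 : k = 0 ∨ k = 1 ∨ k = 2 := by clear hk; omega
  rcases hk012 with h | h | h <;> subst h
  · exact Or.inr (Or.inl (by rw [e2, hk]; ring))
  · exact Or.inl (by rw [e1, hk]; ring)
  · exact Or.inr (Or.inr (by rw [e3, hk]; ring))

private lemma oxtoby_key : ∀ i : ℕ, 1 ≤ i → ∀ n : ℤ,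
    n % (3:ℤ)^i = (((3:ℤ)^i - 1) / 2) % (3:ℤ)^i ∨
    ∃ i' : ℕ, 1 ≤ i' ∧ i' ≤ i ∧
      (n % (3:ℤ)^i' = (((3:ℤ)^(i'-1) - 1) / 2) % (3:ℤ)^i' ∨
       n % (3:ℤ)^i' = ((-(3:ℤ)^(i'-1) - 1) / 2) % (3:ℤ)^i') := by
  intro i hi
  induction i, hi using Nat.le_induction with
  | base =>
    intro n
    rcases (by omega : n % 3 = 0 ∨ n % 3 = 1 ∨ n % 3 = 2) with h | h | h
    · refine Or.inr ⟨1, le_refl _, le_refl _, Or.inl ?_⟩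
      norm_num
      omega
    · left; norm_num; omega
    · refine Or.inr ⟨1, le_refl _, le_refl _, Or.inr ?_⟩
      norm_num
      omega
  | succ i hi IH =>
    intro n
    rcases IH n with hc | ⟨i', a, b, hab⟩
    · have hP : (0:ℤ) < 3^i := by positivity
      have hodd : (3:ℤ)^i % 2 = 1 := Int.odd_iff.mp (Odd.pow ⟨1, by ring⟩)
      have hM : (3:ℤ)^(i+1) = 3 * 3^i := by ring
      rcases arith ((3:ℤ)^i) n hP hodd hc with h | h | h
      · left; rw [hM]; exact h
      · refine Or.inr ⟨i+1, by omega, le_refl _, Or.inl ?_⟩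
        simp only [Nat.add_sub_cancel]
        rw [hM]; exact h
      · refine Or.inr ⟨i+1, by omega, le_refl _, Or.inr ?_⟩
        simp only [Nat.add_sub_cancel]
        rw [hM]; exact h
    · exact Or.inr ⟨i', a, b.trans (Nat.le_succ i), hab⟩

private lemma mem_perSet_shift {X : Type*} (z : ℤ → X) (p s n : ℤ) :
    n ∈ PerSet p (fun k => z (k + s)) ↔ (n + s) ∈ PerSet p z := by
  constructor
  · intro h m hm
    have hd : p ∣ n - (m - s) := by
      obtain ⟨t, ht⟩ := Int.ModEq.dvd (show Int.ModEq p m (n+s) from hm)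
      exact ⟨t, by linarith⟩
    have := h (m - s) (emod_congr hd)
    simpa using this
  · intro h m hm
    have hd : p ∣ (n + s) - (m + s) := by
      obtain ⟨t, ht⟩ := Int.ModEq.dvd (show Int.ModEq p m n from hm)
      exact ⟨t, by linarith⟩
    exact h (m + s) (emod_congr hd)

private lemma perSet_sat {X : Type*} (z : ℤ → X) (p : ℤ) {n n' : ℤ}
    (h : n ∈ PerSet p z) (hnn : n' % p = n % p) : n' ∈ PerSet p z := by
  intro m hm
  rw [h m (hm.trans hnn), h n' hnn]

/-- For a ternary Oxtoby sequence `z`: the `3^i`-periodic part of `σ^s z` only depends on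
`s` mod `3^i`, and `Per_{3^i}(z)` consists exactly of the integers not congruent to the
midpoint `(3^i − 1)/2` of `[0, 3^i)` modulo `3^i`. -/
theorem stmt18 {X : Type*} (x : ℕ → X) (hx : Function.Injective x)
    (z : ℤ → X) (hz : IsOxtoby x z) :
    (∀ i : ℕ, 1 ≤ i → ∀ r s : ℤ, s % (3 : ℤ) ^ i = r % (3 : ℤ) ^ i →
      PerSet ((3 : ℤ) ^ i) (fun n => z (n + s)) = PerSet ((3 : ℤ) ^ i) (fun n => z (n + r))) ∧
    (∀ i : ℕ, 1 ≤ i →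
      PerSet ((3 : ℤ) ^ i) z =
        {n : ℤ | ¬ n % (3 : ℤ) ^ i = (((3 : ℤ) ^ i - 1) / 2) % (3 : ℤ) ^ i}) := by

  constructor
  · intro i hi r s hsr
    ext n
    rw [mem_perSet_shift, mem_perSet_shift]
    have hd : (n + s) % (3:ℤ)^i = (n + r) % (3:ℤ)^i := by
      obtain ⟨t, ht⟩ := Int.ModEq.dvd (show Int.ModEq ((3:ℤ)^i) s r from hsr)
      exact emod_congr ⟨t, by linarith⟩
    exact ⟨fun h => perSet_sat z _ h hd.symm, fun h => perSet_sat z _ h hd⟩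
  · intro i hi
    ext n
    simp only [PerSet, Set.mem_setOf_eq]
    constructor
    · intro h hcn
      have hP : (0:ℤ) < 3^i := by positivity
      have hodd : (3:ℤ)^i % 2 = 1 := Int.odd_iff.mp (Odd.pow ⟨1, by ring⟩)
      set m1 : ℤ := ((3:ℤ)^i - 1)/2 with hm1
      set m2 : ℤ := ((3:ℤ)^(i+1) - 1)/2 with hm2
      have hz1 : z m1 = x (i+1) := by
        refine hz (i+1) (by omega) m1 (Or.inl ?_)
        simp only [Nat.add_sub_cancel, hm1]
      have hz2 : z m2 = x (i+2) := by
        refine hz (i+2) (by omega) m2 (Or.inl ?_)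
        simp only [hm2, show i+2-1 = i+1 from rfl]
      have hM : (3:ℤ)^(i+1) = 3 * 3^i := by ring
      have e1 : m1 % (3:ℤ)^i = n % (3:ℤ)^i := hcn.symm
      have e2 : m2 % (3:ℤ)^i = n % (3:ℤ)^i := by
        have hd : (3:ℤ)^i ∣ n - m2 := by
          obtain ⟨t, ht⟩ := Int.ModEq.dvd (show Int.ModEq ((3:ℤ)^i) n m1 from hcn)
          refine ⟨-(t+1), ?_⟩
          have hm12 : m2 = m1 + 3^i := by rw [hm1, hm2, hM]; omega
          rw [hm12]; linear_combination -ht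
        exact emod_congr hd
      have h1 := h m1 e1
      have h2 := h m2 e2
      have : x (i+1) = x (i+2) := by rw [← hz1, ← hz2, h1, h2]
      have := hx this
      omega
    · intro hne m hm
      rcases oxtoby_key i hi n with hc | ⟨i', h1, h2, hab⟩
      · exact absurd hc hne
      · have hdvd : (3:ℤ)^i' ∣ (3:ℤ)^i := pow_dvd_pow 3 h2
        have hm' : m % (3:ℤ)^i' = n % (3:ℤ)^i' := by
          rw [← Int.emod_emod_of_dvd m hdvd, ← Int.emod_emod_of_dvd n hdvd, hm]
        rcases hab with hA | hB
        · rw [hz i' h1 m (Or.inl (hm'.trans hA)), hz i' h1 n (Or.inl hA)]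
        · rw [hz i' h1 m (Or.inr (hm'.trans hB)), hz i' h1 n (Or.inr hB)]
end
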